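/- arXiv:1104.2049 — 6 statements merged into one kernel-verified Lean document; each statement's English description precedes it below -/
import Mathlib

section
/- For any integers N ≥ 1 and K ≥ 1, any real ρ > 0, and any matrix v̄ ∈ ℝ₊^{N×K} with nonnegative entries, the fixed-point system t_i = ( ρ + (1/K)·Σ_{j=1}^{K} v̄_{ij} / (1 + (1/K)·Σ_{k=1}^{N} v̄_{kj}·t_k) )^{-1}, for i = 1,…,N, admits exactly one solution t = (t_1,…,t_N) ∈ ℝ^N with t_i > 0 for all i. -/
/-!
The right-hand side `F` of the fixed-point system is monotone on nonnegative vectors (each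
`t k` enters through a denominator of a denominator) and maps the box `[0, ρ⁻¹]ᴺ` into itself,
so Knaster–Tarski gives a fixed point, automatically positive. For uniqueness, `F` is strictly
subhomogeneous, `F (c • t) < c • F t` for `c > 1`, because `ρ` does not scale. Given positive
fixed points `t`, `u`, let `c = t i₀ / u i₀` be the largest ratio `t i / u i`. If `c > 1`, then
`t ≤ c • u` and `t i₀ = F t i₀ ≤ F (c • u) i₀ < c * u i₀ = t i₀`; hence `t ≤ u`, and by symmetry
`t = u`. This is Yates' argument for standard interference functions.
-/

open Finset Set Function

theorem exists_isFixedPt_Icc_of_monotoneOn {α : Type*} [ConditionallyCompleteLattice α]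
    {a b : α} (hab : a ≤ b) {f : α → α} (hmaps : MapsTo f (Icc a b) (Icc a b))
    (hmono : MonotoneOn f (Icc a b)) : ∃ x ∈ Icc a b, IsFixedPt f x := by
  have : Fact (a ≤ b) := ⟨hab⟩
  let g : Icc a b →o Icc a b := ⟨hmaps.restrict, fun x y h => hmono x.2 y.2 h⟩
  exact ⟨g.lfp, g.lfp.2, congrArg Subtype.val g.isFixedPt_lfp⟩

theorem le_of_isFixedPt_of_subhomogeneous {ι : Type*} [Finite ι] {F : (ι → ℝ) → ι → ℝ}
    (hmono : MonotoneOn F (Ici 0)) (hsub : ∀ c > 1, ∀ t, 0 ≤ t → ∀ i, F (c • t) i < c * F t i)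
    {t u : ι → ℝ} (ht : 0 ≤ t) (hu : ∀ i, 0 < u i) (hFt : IsFixedPt F t) (hFu : IsFixedPt F u) :
    t ≤ u := by
  intro i
  have : Nonempty ι := ⟨i⟩
  obtain ⟨i₀, hi₀⟩ := Finite.exists_max fun i => t i / u i
  set c := t i₀ / u i₀
  have ht_le : t ≤ c • u := fun k =>
    calc t k = t k / u k * u k := (div_mul_cancel₀ _ (hu k).ne').symm
      _ ≤ c * u k := mul_le_mul_of_nonneg_right (hi₀ k) (hu k).le
  suffices hc : c ≤ 1 by
    calc t i ≤ c * u i := ht_le i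
      _ ≤ u i := mul_le_of_le_one_left (hu i).le hc
  by_contra! hc
  have hcu : c * u i₀ = t i₀ := div_mul_cancel₀ _ (hu i₀).ne'
  have : t i₀ < t i₀ :=
    calc t i₀ = F t i₀ := (congrFun hFt i₀).symm
      _ ≤ F (c • u) i₀ := hmono ht (ht.trans ht_le) ht_le i₀
      _ < c * F u i₀ := hsub c hc u (fun k => (hu k).le) i₀
      _ = t i₀ := by rw [hFu, hcu]
  exact this.false

theorem one_le_one_add_mul_sum {ι : Type*} [Fintype ι] {α : ℝ} {w t : ι → ℝ} (hα : 0 ≤ α)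
    (hw : 0 ≤ w) (ht : 0 ≤ t) : 1 ≤ 1 + α * ∑ k, w k * t k := by
  have : 0 ≤ ∑ k, w k * t k := sum_nonneg fun k _ => mul_nonneg (hw k) (ht k)
  nlinarith

section DeterministicEquivalent

variable {ι κ : Type*} [Fintype ι] [Fintype κ] {α ρ : ℝ} {v : ι → κ → ℝ} {t : ι → ℝ}

noncomputable def deqSum (α : ℝ) (v : ι → κ → ℝ) (t : ι → ℝ) (i : ι) : ℝ :=
  α * ∑ j, v i j / (1 + α * ∑ k, v k j * t k)

/-- With `α = 1 / K`, the fixed points of `deqMap α ρ v` are the diagonals of `T(-ρ)`. -/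
noncomputable def deqMap (α ρ : ℝ) (v : ι → κ → ℝ) (t : ι → ℝ) (i : ι) : ℝ :=
  (ρ + deqSum α v t i)⁻¹

theorem deqSum_nonneg (hα : 0 ≤ α) (hv : ∀ i j, 0 ≤ v i j) (ht : 0 ≤ t) :
    0 ≤ deqSum α v t := fun i =>
  mul_nonneg hα <| sum_nonneg fun j _ => div_nonneg (hv i j) <|
    zero_le_one.trans (one_le_one_add_mul_sum hα (fun k => hv k j) ht)

theorem deqSum_antitoneOn (hα : 0 ≤ α) (hv : ∀ i j, 0 ≤ v i j) :
    AntitoneOn (deqSum α v) (Ici 0) := by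
  intro t ht s _ hts i
  refine mul_le_mul_of_nonneg_left (sum_le_sum fun j _ => ?_) hα
  refine div_le_div_of_nonneg_left (hv i j)
    (zero_lt_one.trans_le (one_le_one_add_mul_sum hα (fun k => hv k j) ht)) ?_
  gcongr with k
  exacts [hv k j, hts k]

theorem inv_mul_deqSum_le_deqSum_smul (hα : 0 ≤ α) (hv : ∀ i j, 0 ≤ v i j) (ht : 0 ≤ t)
    {c : ℝ} (hc : 1 ≤ c) (i : ι) : c⁻¹ * deqSum α v t i ≤ deqSum α v (c • t) i := by
  rw [deqSum, deqSum, mul_left_comm, mul_sum]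
  refine mul_le_mul_of_nonneg_left (sum_le_sum fun j _ => ?_) hα
  set a := α * ∑ k, v k j * t k
  have ha : 0 ≤ a := by linarith [one_le_one_add_mul_sum hα (fun k => hv k j) ht]
  have hca : α * ∑ k, v k j * (c • t) k = c * a := by
    simp only [a, Pi.smul_apply, smul_eq_mul, mul_sum]; congr! 1 with k; ring
  calc c⁻¹ * (v i j / (1 + a)) = v i j / (c * (1 + a)) := by
        rw [mul_comm c, ← div_div, div_eq_inv_mul _ c]
    _ ≤ v i j / (1 + c * a) := by
        apply div_le_div_of_nonneg_left (hv i j) (by positivity); nlinarith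
    _ = v i j / (1 + α * ∑ k, v k j * (c • t) k) := by rw [hca]

theorem deqMap_pos (hα : 0 ≤ α) (hv : ∀ i j, 0 ≤ v i j) (hρ : 0 < ρ) (ht : 0 ≤ t) (i : ι) :
    0 < deqMap α ρ v t i :=
  inv_pos.2 (add_pos_of_pos_of_nonneg hρ (deqSum_nonneg hα hv ht i))

theorem deqMap_le_inv (hα : 0 ≤ α) (hv : ∀ i j, 0 ≤ v i j) (hρ : 0 < ρ) (ht : 0 ≤ t) (i : ι) :
    deqMap α ρ v t i ≤ ρ⁻¹ :=
  inv_anti₀ hρ (le_add_of_nonneg_right (deqSum_nonneg hα hv ht i))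

theorem deqMap_monotoneOn (hα : 0 ≤ α) (hv : ∀ i j, 0 ≤ v i j) (hρ : 0 < ρ) :
    MonotoneOn (deqMap α ρ v) (Ici 0) := fun _ ht _ hs hts i =>
  inv_anti₀ (add_pos_of_pos_of_nonneg hρ (deqSum_nonneg hα hv hs i))
    ((add_le_add_iff_left ρ).2 (deqSum_antitoneOn hα hv ht hs hts i))

theorem deqMap_smul_lt (hα : 0 ≤ α) (hv : ∀ i j, 0 ≤ v i j) (hρ : 0 < ρ) (ht : 0 ≤ t)
    {c : ℝ} (hc : 1 < c) (i : ι) : deqMap α ρ v (c • t) i < c * deqMap α ρ v t i := by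
  have hS := deqSum_nonneg hα hv ht i
  have hc₀ : 0 < c := zero_lt_one.trans hc
  have hlt : c⁻¹ * (ρ + deqSum α v t i) < ρ + deqSum α v (c • t) i := by
    rw [mul_add]
    exact add_lt_add_of_lt_of_le ((inv_mul_lt_iff₀ hc₀).2 (lt_mul_of_one_lt_left hρ hc))
      (inv_mul_deqSum_le_deqSum_smul hα hv ht hc.le i)
  calc deqMap α ρ v (c • t) i < (c⁻¹ * (ρ + deqSum α v t i))⁻¹ :=
        inv_strictAnti₀ (mul_pos (inv_pos.2 hc₀) (add_pos_of_pos_of_nonneg hρ hS)) hlt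
    _ = c * deqMap α ρ v t i := by rw [mul_inv, inv_inv, deqMap]

end DeterministicEquivalent

theorem stmt_0_general (N K : ℕ) (ρ : ℝ) (hρ : 0 < ρ)
    (v : Fin N → Fin K → ℝ) (hv : ∀ i j, 0 ≤ v i j) :
    ∃! t : Fin N → ℝ, (∀ i, 0 < t i) ∧
      ∀ i, t i = (ρ + (1 / (K : ℝ)) * ∑ j, v i j /
        (1 + (1 / (K : ℝ)) * ∑ k, v k j * t k))⁻¹ := by
  have hα : 0 ≤ 1 / (K : ℝ) := by positivity
  have hmono := deqMap_monotoneOn hα hv hρ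
  have hsub : ∀ c > 1, ∀ t, 0 ≤ t → ∀ i, deqMap _ ρ v (c • t) i < c * deqMap _ ρ v t i :=
    fun c hc t ht => deqMap_smul_lt hα hv hρ ht hc
  obtain ⟨t, ht, hfix⟩ := exists_isFixedPt_Icc_of_monotoneOn (a := 0) (b := fun _ => ρ⁻¹)
    (fun _ => (inv_pos.2 hρ).le)
    (fun t ht => ⟨fun i => (deqMap_pos hα hv hρ ht.1 i).le, deqMap_le_inv hα hv hρ ht.1⟩)
    (hmono.mono Icc_subset_Ici_self)
  have hpos : ∀ i, 0 < t i := fun i => hfix ▸ deqMap_pos hα hv hρ ht.1 i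
  refine ⟨t, ⟨hpos, fun i => (congrFun hfix i).symm⟩, fun s ⟨hs, hsfix⟩ => ?_⟩
  have hs_fixed : IsFixedPt (deqMap (1 / (K : ℝ)) ρ v) s := funext fun i => (hsfix i).symm
  exact le_antisymm
    (le_of_isFixedPt_of_subhomogeneous hmono hsub (fun i => (hs i).le) hpos hs_fixed hfix)
    (le_of_isFixedPt_of_subhomogeneous hmono hsub ht.1 hs hfix hs_fixed)

/-- Existence and uniqueness of a positive solution to the deterministic-equivalent
fixed-point system `t_i = (ρ + (1/K) Σ_j v̄_{ij} / (1 + (1/K) Σ_k v̄_{kj} t_k))⁻¹`. -/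
theorem stmt_0 (N K : ℕ) (hN : 1 ≤ N) (hK : 1 ≤ K) (ρ : ℝ) (hρ : 0 < ρ)
    (v : Fin N → Fin K → ℝ) (hv : ∀ i j, 0 ≤ v i j) :
    ∃! t : Fin N → ℝ, (∀ i, 0 < t i) ∧
      ∀ i, t i = (ρ + (1 / (K : ℝ)) * ∑ j, v i j /
        (1 + (1 / (K : ℝ)) * ∑ k, v k j * t k))⁻¹ :=
  stmt_0_general N K ρ hρ v hv
end

section
/- Let N ≥ 1, K ≥ 1 be integers, ρ > 0, and let I ⊆ ℝ be an open interval. Suppose v̄_{ij} : I → [0,∞) and t_i : I → (0,∞) are differentiable at τ₀ ∈ I, that t(τ) satisfies the fixed-point system t_i(τ) = ( ρ + (1/K)·Σ_{j=1}^{K} v̄_{ij}(τ)/(1 + δ_j(τ)) )^{-1} for all τ ∈ I with δ_j(τ) = (1/K)·Σ_{i=1}^{N} v̄_{ij}(τ)·t_i(τ), and that v̄'_{ij}(τ₀) > 0 for all i,j. Then the function R̄(τ) = (1/N)·[ Σ_{j=1}^{K} log(1+δ_j(τ)) − Σ_{i=1}^{N} log(ρ·t_i(τ)) − Σ_{j=1}^{K}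 δ_j(τ)/(1+δ_j(τ)) ] has strictly positive derivative at τ₀: R̄'(τ₀) > 0. -/
/-!
Differentiating the fixed-point equation `1 / t_i = ρ + (1/K) Σ_j v̄_ij / (1 + δ_j)` expresses
`Σ_i t_i' / t_i` through the `v̄_ij'` and the `δ_j'`. Substituting it into `R̄'`, all terms in `δ_j'`
cancel (an envelope-theorem phenomenon: `R̄` is stationary in `t` at the fixed point), leaving
`N R̄' = (1/K) Σ_j Σ_i t_i v̄_ij' / (1 + δ_j)`, which is positive.
-/

open Finset Filter Topology

lemma hasDerivAt_of_eventuallyEq_inv {f g : ℝ → ℝ} {g' x : ℝ} (hg : HasDerivAt g g' x)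
    (hfg : f =ᶠ[𝓝 x] fun y => (g y)⁻¹) (hf : f x ≠ 0) : HasDerivAt f (-f x ^ 2 * g') x := by
  have hfx : f x = (g x)⁻¹ := hfg.eq_of_nhds
  have hgx : g x ≠ 0 := by simpa [hfx] using hf
  refine ((hg.inv hgx).congr_of_eventuallyEq hfg).congr_deriv ?_
  rw [hfx]
  field_simp

lemma hasDerivAt_log_one_add_sub_div {f : ℝ → ℝ} {f' x : ℝ} (hf : HasDerivAt f f' x)
    (h : 1 + f x ≠ 0) :
    HasDerivAt (fun y => Real.log (1 + f y) - f y / (1 + f y)) (f x * f' / (1 + f x) ^ 2) x := by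
  have h1 := hf.const_add 1
  refine ((h1.log h).sub (hf.div h1 h)).congr_deriv ?_
  field_simp
  ring

namespace DetEquiv

variable {ι κ : Type*} [Fintype ι]

/-- The paper's `δ_j`, with `c` in place of `1/K`. -/
def delta (c : ℝ) (v : ι → κ → ℝ → ℝ) (t : ι → ℝ → ℝ) (j : κ) (τ : ℝ) : ℝ :=
  c * ∑ i, v i j τ * t i τ

lemma hasDerivAt_delta {c : ℝ} {v : ι → κ → ℝ → ℝ} {t : ι → ℝ → ℝ} {v' : ι → κ → ℝ}
    {t' : ι → ℝ} {x : ℝ} (hv : ∀ i j, HasDerivAt (v i j) (v' i j) x)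
    (ht : ∀ i, HasDerivAt (t i) (t' i) x) (j : κ) :
    HasDerivAt (delta c v t j) (c * ∑ i, (v' i j * t i x + v i j x * t' i)) x :=
  (HasDerivAt.fun_sum fun i _ => (hv i j).mul (ht i)).const_mul c

variable [Fintype κ]

/-- The fixed-point system reads `t_i = (fixedPointMap c ρ v t i)⁻¹`. -/
noncomputable def fixedPointMap (c ρ : ℝ) (v : ι → κ → ℝ → ℝ) (t : ι → ℝ → ℝ) (i : ι) (τ : ℝ) : ℝ :=
  ρ + c * ∑ j, v i j τ / (1 + delta c v t j τ)

variable {c ρ : ℝ} {v : ι → κ → ℝ → ℝ} {t : ι → ℝ → ℝ} {v' : ι → κ → ℝ} {t' : ι → ℝ}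
  {δ' : κ → ℝ} {x : ℝ}

lemma hasDerivAt_fixedPointMap (hv : ∀ i j, HasDerivAt (v i j) (v' i j) x)
    (hδ : ∀ j, HasDerivAt (delta c v t j) (δ' j) x) (hδ0 : ∀ j, 1 + delta c v t j x ≠ 0)
    (i : ι) :
    HasDerivAt (fixedPointMap c ρ v t i)
      (c * ∑ j, (v' i j / (1 + delta c v t j x)
        - v i j x * δ' j / (1 + delta c v t j x) ^ 2)) x := by
  refine (((HasDerivAt.fun_sum fun j _ =>
    (hv i j).div ((hδ j).const_add 1) (hδ0 j)).const_mul c).const_add ρ).congr_deriv ?_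
  congr 1
  refine sum_congr rfl fun j _ => ?_
  field_simp [hδ0 j]

/-- The envelope identity: the `δ_j'`-part of `Σ_i t_i' / t_i` cancels the `δ_j'`-part of the
derivative of the rate. -/
lemma sum_div_eq_of_fixedPoint (ht0 : ∀ i, t i x ≠ 0)
    (ht' : ∀ i, t' i = -t i x ^ 2 * (c * ∑ j, (v' i j / (1 + delta c v t j x)
      - v i j x * δ' j / (1 + delta c v t j x) ^ 2))) :
    ∑ i, t' i / t i x = ∑ j, delta c v t j x * δ' j / (1 + delta c v t j x) ^ 2
      - c * ∑ j, ∑ i, t i x * v' i j / (1 + delta c v t j x) := by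
  have hterm : ∀ i, t' i / t i x = c * ∑ j, (t i x * v i j x * δ' j / (1 + delta c v t j x) ^ 2
      - t i x * v' i j / (1 + delta c v t j x)) := by
    intro i
    calc t' i / t i x = -t i x * (c * ∑ j, (v' i j / (1 + delta c v t j x)
          - v i j x * δ' j / (1 + delta c v t j x) ^ 2)) := by
          rw [ht' i]
          field_simp [ht0 i]
      _ = _ := by
          rw [mul_sum, mul_sum, mul_sum]
          exact sum_congr rfl fun j _ => by ring
  have hdelta : ∀ j, delta c v t j x = c * ∑ i, t i x * v i j x := fun j => by
    simp only [delta, mul_comm (t _ x)]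
  calc ∑ i, t' i / t i x
      = c * ∑ j, ∑ i, (t i x * v i j x * δ' j / (1 + delta c v t j x) ^ 2
          - t i x * v' i j / (1 + delta c v t j x)) := by
        simp only [hterm, ← mul_sum]
        rw [sum_comm]
    _ = _ := by
        simp only [sum_sub_distrib, mul_sub]
        congr 1
        rw [mul_sum]
        refine sum_congr rfl fun j _ => ?_
        rw [← sum_div, ← sum_mul, hdelta j]
        ring

lemma hasDerivAt_rate (hρ : ρ ≠ 0) (ht : ∀ i, HasDerivAt (t i) (t' i) x)
    (hδ : ∀ j, HasDerivAt (delta c v t j) (δ' j) x) (ht0 : ∀ i, t i x ≠ 0)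
    (hδ0 : ∀ j, 1 + delta c v t j x ≠ 0) :
    HasDerivAt (fun τ => (∑ j, Real.log (1 + delta c v t j τ)) - (∑ i, Real.log (ρ * t i τ))
        - ∑ j, delta c v t j τ / (1 + delta c v t j τ))
      (∑ j, delta c v t j x * δ' j / (1 + delta c v t j x) ^ 2 - ∑ i, t' i / t i x) x := by
  have hlog : ∀ i, HasDerivAt (fun τ => Real.log (ρ * t i τ)) (t' i / t i x) x := fun i => by
    refine (((ht i).const_mul ρ).log (mul_ne_zero hρ (ht0 i))).congr_deriv ?_
    field_simp
  refine ((HasDerivAt.fun_sum (u := univ) fun j _ =>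
    hasDerivAt_log_one_add_sub_div (hδ j) (hδ0 j)).sub
      (HasDerivAt.fun_sum (u := univ) fun i _ => hlog i)).congr_of_eventuallyEq
      (.of_forall fun τ => ?_)
  simp only [Pi.sub_apply, sum_sub_distrib]
  ring

theorem hasDerivAt_rate_of_fixedPoint (hρ : ρ ≠ 0) (hv : ∀ i j, HasDerivAt (v i j) (v' i j) x)
    (ht : ∀ i, HasDerivAt (t i) (t' i) x) (ht0 : ∀ i, t i x ≠ 0)
    (hδ0 : ∀ j, 1 + delta c v t j x ≠ 0)
    (hfix : ∀ᶠ τ in 𝓝 x, ∀ i, t i τ = (fixedPointMap c ρ v t i τ)⁻¹) :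
    HasDerivAt (fun τ => (∑ j, Real.log (1 + delta c v t j τ)) - (∑ i, Real.log (ρ * t i τ))
        - ∑ j, delta c v t j τ / (1 + delta c v t j τ))
      (c * ∑ j, ∑ i, t i x * v' i j / (1 + delta c v t j x)) x := by
  have hδ := hasDerivAt_delta (c := c) hv ht
  have ht' : ∀ i, t' i = _ := fun i => (ht i).unique <| hasDerivAt_of_eventuallyEq_inv
    (hasDerivAt_fixedPointMap (ρ := ρ) hv hδ hδ0 i) (hfix.mono fun τ h => h i) (ht0 i)
  refine (hasDerivAt_rate hρ ht hδ ht0 hδ0).congr_deriv ?_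
  rw [sum_div_eq_of_fixedPoint ht0 ht', sub_sub_cancel]

end DetEquiv

/-- If all entries of the variance profile have strictly positive derivative at `τ₀`,
then the deterministic equivalent `R̄(τ)` of the ergodic achievable rate has strictly
positive derivative at `τ₀`. -/
theorem stmt_4 (N K : ℕ) (hN : 1 ≤ N) (hK : 1 ≤ K) (ρ : ℝ) (hρ : 0 < ρ)
    (a b : ℝ) (τ₀ : ℝ) (hτ₀ : τ₀ ∈ Set.Ioo a b)
    (v : Fin N → Fin K → ℝ → ℝ) (v' : Fin N → Fin K → ℝ)
    (t : Fin N → ℝ → ℝ)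
    (hv_nonneg : ∀ i j, ∀ τ ∈ Set.Ioo a b, 0 ≤ v i j τ)
    (hv : ∀ i j, HasDerivAt (v i j) (v' i j) τ₀)
    (hv'_pos : ∀ i j, 0 < v' i j)
    (ht_diff : ∀ i, DifferentiableAt ℝ (t i) τ₀)
    (ht_pos : ∀ i, ∀ τ ∈ Set.Ioo a b, 0 < t i τ)
    (ht_fix : ∀ τ ∈ Set.Ioo a b, ∀ i, t i τ =
      (ρ + (1 / (K : ℝ)) * ∑ j, v i j τ /
        (1 + (1 / (K : ℝ)) * ∑ k, v k j τ * t k τ))⁻¹) :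
    ∃ d : ℝ, 0 < d ∧
      HasDerivAt (fun τ => (1 / (N : ℝ)) *
        ((∑ j, Real.log (1 + (1 / (K : ℝ)) * ∑ i, v i j τ * t i τ))
          - (∑ i, Real.log (ρ * t i τ))
          - ∑ j, ((1 / (K : ℝ)) * ∑ i, v i j τ * t i τ) /
              (1 + (1 / (K : ℝ)) * ∑ i, v i j τ * t i τ))) d τ₀ := by
  have := Fin.pos_iff_nonempty.mp hN
  have := Fin.pos_iff_nonempty.mp hK
  have ht0 : ∀ i, 0 < t i τ₀ := fun i => ht_pos i τ₀ hτ₀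
  have hδ0 : ∀ j, 0 < 1 + DetEquiv.delta (1 / (K : ℝ)) v t j τ₀ := fun j => by
    have := sum_nonneg fun i (_ : i ∈ univ) => mul_nonneg (hv_nonneg i j τ₀ hτ₀) (ht0 i).le
    unfold DetEquiv.delta
    positivity
  have hfix : ∀ᶠ τ in 𝓝 τ₀, ∀ i, t i τ = (DetEquiv.fixedPointMap (1 / (K : ℝ)) ρ v t i τ)⁻¹ :=
    eventually_of_mem (Ioo_mem_nhds hτ₀.1 hτ₀.2) ht_fix
  refine ⟨_, ?_, (DetEquiv.hasDerivAt_rate_of_fixedPoint hρ.ne' hv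
    (fun i => (ht_diff i).hasDerivAt) (fun i => (ht0 i).ne') (fun j => (hδ0 j).ne')
    hfix).const_mul (1 / (N : ℝ))⟩
  have hsum := sum_pos (fun j _ => sum_pos (fun i _ =>
    div_pos (mul_pos (ht0 i) (hv'_pos i j)) (hδ0 j)) univ_nonempty) (univ_nonempty (α := Fin K))
  positivity
end

section
/- Let N ≥ 1 be an integer, P > 0, L > 0, σ² ≥ 0, and let v_{ij} > 0 for 1 ≤ i,j ≤ N. For τ > 0 define ṽ_{ij}(τ) = v_{ij}(1+σ²)/(τ(P/L)v_{ij} + 1 + σ²), v̂_{ij}(τ) = τ(P/L)v_{ij}²/(τ(P/L)v_{ij} + 1 + σ²), and v̄_{ij}(τ) = v̂_{ij}(τ)/(1 + σ² + (P/L)·Σ_{ℓ=1}^{N} ṽ_{iℓ}(τ)). Assume the doubly regular condition: for every τ > 0 there is 𝒦(τ) > 0 such that (1/N)·Σ_{i=1}^{N} v̄_{ik}(τ) = 𝒦(τ) for every column k and (1/N)·Σ_{j=1}^{N} v̄_{ℓj}(τ) = 𝒦(τ) for every row ℓ. Define t_P(τ) = ( √(1 + (N P/L)·𝒦(τ)) −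 1 )/( 2·𝒦(τ) ) and R̄(τ) = log(1 + 𝒦(τ)·t_P(τ)) − log( (L/(N P))·t_P(τ) ) − 𝒦(τ)·t_P(τ)/(1 + 𝒦(τ)·t_P(τ)). Then R̄ is strictly concave on (0,∞). -/
/-!
Reading the row condition on a single row and summing the effective variances in closed form
gives, for `τ > 0`, `𝒦 τ = α (1 + ∑ⱼ (τ + aⱼ)⁻¹)⁻¹ - β` with `α > 0` and `aⱼ > 0`. With
`qⱼ = (τ + aⱼ)⁻¹`, the second derivative of `(1 + ∑ⱼ qⱼ)⁻¹` has the sign of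
`(∑ⱼ qⱼ²)² - (1 + ∑ⱼ qⱼ) ∑ⱼ qⱼ³`, which is negative by Cauchy–Schwarz, so `𝒦` is strictly concave.

In terms of `r = √(1 + (N P / L) 𝒦)` the closed form of `t_P` turns the rate into
`2 log (1 + r) - (r - 1) / (r + 1)`, a concave increasing function of `r > 1`, while `r` is
strictly concave in `τ` as the square root of a positive strictly concave function.
-/

open Finset Set Real

theorem StrictConcaveOn.const_add_mul {E : Type*} [AddCommMonoid E] [SMul ℝ E] {s : Set E}
    {f : E → ℝ} (hf : StrictConcaveOn ℝ s f) {c : ℝ} (hc : 0 < c) (b : ℝ) :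
    StrictConcaveOn ℝ s (fun x => b + c * f x) := by
  refine ⟨hf.1, fun x hx y hy hxy a a' ha ha' haa' => ?_⟩
  have h := mul_lt_mul_of_pos_left (hf.2 hx hy hxy ha ha' haa') hc
  simp only [smul_eq_mul] at h ⊢
  linear_combination h + b * haa'

theorem ConcaveOn.comp_strictConcaveOn_of_mapsTo {E : Type*} [AddCommMonoid E] [SMul ℝ E]
    {s : Set E} {t : Set ℝ} {f : E → ℝ} {g : ℝ → ℝ} (hg : ConcaveOn ℝ t g)
    (hg' : StrictMonoOn g t) (hf : StrictConcaveOn ℝ s f) (hst : MapsTo f s t) :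
    StrictConcaveOn ℝ s (g ∘ f) := by
  refine ⟨hf.1, fun x hx y hy hxy a b ha hb hab => ?_⟩
  calc a • g (f x) + b • g (f y) ≤ g (a • f x + b • f y) :=
        hg.2 (hst hx) (hst hy) ha.le hb.le hab
    _ < g (f (a • x + b • y)) :=
        hg' (hg.1 (hst hx) (hst hy) ha.le hb.le hab) (hst (hf.1 hx hy ha.le hb.le hab))
          (hf.2 hx hy hxy ha hb hab)

theorem StrictConcaveOn.sqrt {E : Type*} [AddCommMonoid E] [SMul ℝ E] {s : Set E}
    {f : E → ℝ} (hf : StrictConcaveOn ℝ s f) (hf₀ : ∀ x ∈ s, 0 ≤ f x) :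
    StrictConcaveOn ℝ s (fun x => √(f x)) :=
  strictConcaveOn_sqrt.concaveOn.comp_strictConcaveOn_of_mapsTo
    (fun _ hx _ _ hxy => Real.sqrt_lt_sqrt hx hxy) hf hf₀

theorem strictMonoOn_of_hasDerivAt_pos {D : Set ℝ} (hD : Convex ℝ D) {f f' : ℝ → ℝ}
    (hf : ∀ x ∈ D, HasDerivAt f (f' x) x) (hf' : ∀ x ∈ D, 0 < f' x) : StrictMonoOn f D :=
  strictMonoOn_of_deriv_pos hD (fun x hx => (hf x hx).continuousAt.continuousWithinAt)
    fun x hx => (hf x (interior_subset hx)).deriv ▸ hf' x (interior_subset hx)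

theorem strictConcaveOn_of_hasDerivAt2_neg {D : Set ℝ} (hD : Convex ℝ D) {f f' f'' : ℝ → ℝ}
    (hf : ∀ x ∈ D, HasDerivAt f (f' x) x) (hf' : ∀ x ∈ D, HasDerivAt f' (f'' x) x)
    (hf'' : ∀ x ∈ D, f'' x < 0) : StrictConcaveOn ℝ D f := by
  have hanti : StrictAntiOn f' D := by
    have := strictMonoOn_of_hasDerivAt_pos hD (fun x hx => (hf' x hx).neg)
      fun x hx => neg_pos.2 (hf'' x hx)
    exact fun x hx y hy hxy => neg_lt_neg_iff.1 (this hx hy hxy)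
  refine StrictAntiOn.strictConcaveOn_of_deriv hD
    (fun x hx => (hf x hx).continuousAt.continuousWithinAt) fun x hx y hy hxy => ?_
  rw [(hf x (interior_subset hx)).deriv, (hf y (interior_subset hy)).deriv]
  exact hanti (interior_subset hx) (interior_subset hy) hxy

theorem hasDerivAt_inv_add_pow (a : ℝ) (k : ℕ) {τ : ℝ} (h : τ + a ≠ 0) :
    HasDerivAt (fun x => (x + a)⁻¹ ^ k) (-k * (τ + a)⁻¹ ^ (k + 1)) τ := by
  refine ((((hasDerivAt_id τ).add_const a).inv h).fun_pow k).congr_deriv ?_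
  rcases k with _ | k
  · simp
  · simp only [id, Pi.inv_apply, Nat.cast_add, Nat.cast_one, Nat.add_sub_cancel]
    rw [div_eq_mul_inv, ← inv_pow]
    ring

theorem strictConcaveOn_inv_one_add_sum_inv {ι : Type*} [Fintype ι] [Nonempty ι] {a : ι → ℝ}
    (ha : ∀ i, 0 ≤ a i) : StrictConcaveOn ℝ (Ioi 0) (fun τ => (1 + ∑ i, (τ + a i)⁻¹)⁻¹) := by
  set S : ℕ → ℝ → ℝ := fun k τ => ∑ i, (τ + a i)⁻¹ ^ k with hS
  have hpos : ∀ τ ∈ Ioi (0 : ℝ), ∀ i, 0 < τ + a i := fun τ hτ i =>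
    add_pos_of_pos_of_nonneg hτ (ha i)
  have hS_pos : ∀ k, ∀ τ ∈ Ioi (0 : ℝ), 0 < S k τ := fun k τ hτ =>
    Finset.sum_pos (fun i _ => pow_pos (inv_pos.2 (hpos τ hτ i)) k) univ_nonempty
  have hS_deriv : ∀ k, ∀ τ ∈ Ioi (0 : ℝ), HasDerivAt (S k) (-k * S (k + 1) τ) τ := by
    intro k τ hτ
    simpa only [hS, Finset.mul_sum] using
      HasDerivAt.fun_sum fun i _ => hasDerivAt_inv_add_pow (a i) k (hpos τ hτ i).ne'
  have hu : ∀ τ ∈ Ioi (0 : ℝ), 0 < 1 + S 1 τ := fun τ hτ => by linarith [hS_pos 1 τ hτ]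
  have hCS : ∀ τ ∈ Ioi (0 : ℝ), S 2 τ ^ 2 ≤ S 1 τ * S 3 τ := fun τ hτ =>
    sum_sq_le_sum_mul_sum_of_sq_le_mul _ (fun i _ => pow_nonneg (inv_pos.2 (hpos τ hτ i)).le 1)
      (fun i _ => pow_nonneg (inv_pos.2 (hpos τ hτ i)).le 3) fun i _ => le_of_eq (by ring)
  have hinv : StrictConcaveOn ℝ (Ioi 0) (fun τ => (1 + S 1 τ)⁻¹) := by
    refine strictConcaveOn_of_hasDerivAt2_neg (convex_Ioi 0)
      (f' := fun τ => S 2 τ / (1 + S 1 τ) ^ 2)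
      (f'' := fun τ => 2 * (S 2 τ ^ 2 - (1 + S 1 τ) * S 3 τ) / (1 + S 1 τ) ^ 3) ?_ ?_ ?_
    · intro τ hτ
      refine (((hS_deriv 1 τ hτ).const_add 1).inv (hu τ hτ).ne').congr_deriv ?_
      ring
    · intro τ hτ
      have hne := (hu τ hτ).ne'
      refine ((hS_deriv 2 τ hτ).div (((hS_deriv 1 τ hτ).const_add 1).fun_pow 2)
        (pow_ne_zero 2 hne)).congr_deriv ?_
      field_simp
      ring
    · intro τ hτ
      have := hCS τ hτ
      have := hS_pos 3 τ hτ
      have := hu τ hτ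
      apply div_neg_of_neg_of_pos _ (by positivity)
      nlinarith
  simpa only [hS, pow_one] using hinv

theorem hasDerivAt_two_log_one_add_sub_div {r : ℝ} (hr : 0 < r) :
    HasDerivAt (fun x => 2 * log (1 + x) - (x - 1) / (x + 1)) (2 * r / (1 + r) ^ 2) r := by
  have h1 : 1 + r ≠ 0 := by positivity
  have h2 : r + 1 ≠ 0 := by positivity
  refine ((((hasDerivAt_id r).const_add 1).log h1).const_mul 2 |>.sub
    (((hasDerivAt_id r).sub_const 1).div ((hasDerivAt_id r).add_const 1) h2)).congr_deriv ?_
  simp only [id]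
  field_simp
  ring

theorem strictMonoOn_two_log_one_add_sub_div :
    StrictMonoOn (fun x => 2 * log (1 + x) - (x - 1) / (x + 1)) (Ioi 0) :=
  strictMonoOn_of_hasDerivAt_pos (convex_Ioi 0)
    (fun _ hr => hasDerivAt_two_log_one_add_sub_div hr) fun r (hr : 0 < r) => by positivity

theorem strictConcaveOn_two_log_one_add_sub_div :
    StrictConcaveOn ℝ (Ioi 1) (fun x => 2 * log (1 + x) - (x - 1) / (x + 1)) := by
  refine strictConcaveOn_of_hasDerivAt2_neg (convex_Ioi 1)
    (f'' := fun r => 2 * (1 - r) / (1 + r) ^ 3)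
    (fun r hr => hasDerivAt_two_log_one_add_sub_div (zero_lt_one.trans hr))
    (fun r (hr : 1 < r) => ?_)
    fun r (hr : 1 < r) => div_neg_of_neg_of_pos (by linarith) (by positivity)
  have h1 : 1 + r ≠ 0 := by positivity
  refine ((((hasDerivAt_id r).const_mul 2).div (((hasDerivAt_id r).const_add 1).fun_pow 2)
    (pow_ne_zero 2 h1))).congr_deriv ?_
  simp only [id]
  field_simp
  ring

theorem log_rate_eq_of_sqrt {a k t : ℝ} (ha : 0 < a) (hk : 0 < k)
    (ht : t = (√(1 + a * k) - 1) / (2 * k)) :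
    log (1 + k * t) - log (a⁻¹ * t) - k * t / (1 + k * t) =
      2 * log (1 + √(1 + a * k)) - (√(1 + a * k) - 1) / (√(1 + a * k) + 1) := by
  set r := √(1 + a * k) with hr
  have hr2 : r ^ 2 = 1 + a * k := sq_sqrt (by positivity)
  have hr1 : 1 < r := (lt_sqrt zero_le_one).2 (by nlinarith)
  have hkt : k * t = (r - 1) / 2 := by
    rw [ht]
    field_simp
  have hat : a⁻¹ * t = (2 * (1 + r))⁻¹ := by
    rw [ht]
    field_simp
    linear_combination hr2
  have hlog : log ((1 + r) / 2) - log (2 * (1 + r))⁻¹ = 2 * log (1 + r) := by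
    rw [log_inv, sub_neg_eq_add, ← log_mul (by positivity) (by positivity),
      show (1 + r) / 2 * (2 * (1 + r)) = (1 + r) ^ 2 by ring, log_pow]
    norm_num
  have : 1 + r ≠ 0 := by positivity
  have : r + 1 ≠ 0 := by positivity
  rw [hkt, hat, show 1 + (r - 1) / 2 = (1 + r) / 2 by ring, hlog]
  congr 1
  field_simp
  ring

theorem sum_effective_variance_eq {ι : Type*} [Fintype ι] {b d τ : ℝ} (hb : 0 < b) (hd : 0 < d)
    (hτ : 0 ≤ τ) {w : ι → ℝ} (hw : ∀ j, 0 < w j) :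
    ∑ j, τ * b * w j ^ 2 / (τ * b * w j + d) / (d + b * ∑ l, w l * d / (τ * b * w l + d)) =
      (∑ j, w j + d / b) / d * (1 + ∑ j, (τ + d / (b * w j))⁻¹)⁻¹ - 1 / b := by
  have hw' : ∀ j, 0 < τ * b * w j + d := fun j => by have := hw j; positivity
  have herr : ∀ j, w j * d / (τ * b * w j + d) = d / b * (τ + d / (b * w j))⁻¹ := fun j => by
    have := hw j
    have := hw' j
    field_simp
  have hest : ∀ j, τ * b * w j ^ 2 / (τ * b * w j + d) = w j - d / b * (τ + d / (b * w j))⁻¹ :=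
    fun j => by
      rw [← herr]
      have := hw' j
      field_simp
      ring
  have hS : 0 ≤ ∑ j, (τ + d / (b * w j))⁻¹ :=
    sum_nonneg fun j _ => by have := hw j; positivity
  rw [← sum_div, sum_congr rfl fun j _ => hest j, sum_congr rfl fun j _ => herr j,
    sum_sub_distrib, ← mul_sum]
  generalize ∑ j, (τ + d / (b * w j))⁻¹ = S at hS ⊢
  field_simp
  ring

theorem stmt_5_general (N : ℕ) (hN : 1 ≤ N) (P L σ2 : ℝ)
    (hP : 0 < P) (hL : 0 < L) (hσ2 : 0 ≤ σ2)
    (v : Fin N → Fin N → ℝ) (hv : ∀ i j, 0 < v i j)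
    (vbar : Fin N → Fin N → ℝ → ℝ)
    (hvbar : ∀ i j, ∀ τ : ℝ, vbar i j τ =
      (τ * (P / L) * v i j ^ 2 / (τ * (P / L) * v i j + 1 + σ2)) /
        (1 + σ2 + (P / L) * ∑ l, v i l * (1 + σ2) / (τ * (P / L) * v i l + 1 + σ2)))
    (𝒦 : ℝ → ℝ) (h𝒦_pos : ∀ τ > (0 : ℝ), 0 < 𝒦 τ)
    (hrow : ∀ τ > (0 : ℝ), ∀ l, (1 / (N : ℝ)) * ∑ j, vbar l j τ = 𝒦 τ)
    (tP : ℝ → ℝ)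
    (htP : ∀ τ : ℝ, tP τ =
      (Real.sqrt (1 + ((N : ℝ) * P / L) * 𝒦 τ) - 1) / (2 * 𝒦 τ)) :
    StrictConcaveOn ℝ (Set.Ioi 0) (fun τ =>
      Real.log (1 + 𝒦 τ * tP τ) - Real.log ((L / ((N : ℝ) * P)) * tP τ)
        - 𝒦 τ * tP τ / (1 + 𝒦 τ * tP τ)) := by
  have hb : 0 < P / L := div_pos hP hL
  have hd : 0 < 1 + σ2 := by linarith
  have hc : 0 < (N : ℝ) * P / L := by positivity
  have : Nonempty (Fin N) := ⟨⟨0, hN⟩⟩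
  set i₀ : Fin N := ⟨0, hN⟩
  have hW : 0 < ∑ j, v i₀ j := sum_pos (fun j _ => hv i₀ j) univ_nonempty
  have h𝒦 : StrictConcaveOn ℝ (Ioi 0) 𝒦 := by
    refine ((strictConcaveOn_inv_one_add_sum_inv (a := fun j => (1 + σ2) / (P / L * v i₀ j))
      fun j => by have := hv i₀ j; positivity).const_add_mul
      (c := (∑ j, v i₀ j + (1 + σ2) / (P / L)) / (1 + σ2) / N)
      (by positivity) (-(1 / (N * (P / L))))).congr fun τ (hτ : 0 < τ) => ?_
    have hsum := sum_effective_variance_eq hb hd hτ.le (hv i₀)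
    simp only [← add_assoc] at hsum
    rw [← hrow τ hτ i₀]
    simp only [hvbar]
    rw [hsum]
    field_simp
    ring
  have hroot : StrictConcaveOn ℝ (Ioi 0) (fun τ => √(1 + (N * P / L) * 𝒦 τ)) :=
    (h𝒦.const_add_mul hc 1).sqrt fun τ hτ => by
      have := h𝒦_pos τ hτ
      positivity
  refine (strictConcaveOn_two_log_one_add_sub_div.concaveOn.comp_strictConcaveOn_of_mapsTo
    (strictMonoOn_two_log_one_add_sub_div.mono (Ioi_subset_Ioi zero_le_one)) hroot
    fun τ hτ => ?_).congr fun τ hτ => ?_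
  · have := h𝒦_pos τ hτ
    exact (lt_sqrt zero_le_one).2 (by simp only [one_pow, lt_add_iff_pos_right]; positivity)
  · rw [show L / (N * P) = (N * P / L)⁻¹ by rw [inv_div]]
    exact (log_rate_eq_of_sqrt hc (h𝒦_pos τ hτ) (htP τ)).symm

/-- Strict concavity of the deterministic-equivalent rate `R̄(τ)` in the training
length `τ` for a doubly regular effective variance profile. Here `vbar i j τ` is the
effective variance `v̂_{ij}(τ)/(1 + σ² + (P/L) Σ_ℓ ṽ_{iℓ}(τ))` built from the MMSE
estimate/error variances, `𝒦(τ)` is the common normalized row/column sum, and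
`tP(τ)` the closed-form positive solution of the scalar fixed-point equation. -/
theorem stmt_5 (N : ℕ) (hN : 1 ≤ N) (P L σ2 : ℝ)
    (hP : 0 < P) (hL : 0 < L) (hσ2 : 0 ≤ σ2)
    (v : Fin N → Fin N → ℝ) (hv : ∀ i j, 0 < v i j)
    (vbar : Fin N → Fin N → ℝ → ℝ)
    (hvbar : ∀ i j, ∀ τ : ℝ, vbar i j τ =
      (τ * (P / L) * v i j ^ 2 / (τ * (P / L) * v i j + 1 + σ2)) /
        (1 + σ2 + (P / L) * ∑ l, v i l * (1 + σ2) / (τ * (P / L) * v i l + 1 + σ2)))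
    (𝒦 : ℝ → ℝ) (h𝒦_pos : ∀ τ > (0 : ℝ), 0 < 𝒦 τ)
    (hcol : ∀ τ > (0 : ℝ), ∀ k, (1 / (N : ℝ)) * ∑ i, vbar i k τ = 𝒦 τ)
    (hrow : ∀ τ > (0 : ℝ), ∀ l, (1 / (N : ℝ)) * ∑ j, vbar l j τ = 𝒦 τ)
    (tP : ℝ → ℝ)
    (htP : ∀ τ : ℝ, tP τ =
      (Real.sqrt (1 + ((N : ℝ) * P / L) * 𝒦 τ) - 1) / (2 * 𝒦 τ)) :
    StrictConcaveOn ℝ (Set.Ioi 0) (fun τ =>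
      Real.log (1 + 𝒦 τ * tP τ) - Real.log ((L / ((N : ℝ) * P)) * tP τ)
        - 𝒦 τ * tP τ / (1 + 𝒦 τ * tP τ)) :=
  stmt_5_general N hN P L σ2 hP hL hσ2 v hv vbar hvbar 𝒦 h𝒦_pos hrow tP htP
end

section
/- Let m ≥ 1 be an integer, c > 0, and for j = 1,…,m let a_j ≥ 0, b_j ≥ 0 and d_j > 0. Then the function f(τ) = 1/( c + Σ_{j=1}^{m} b_j/(a_j·τ + d_j) ) is nondecreasing and concave on [0,∞). -/
/-!
Write `G τ = c + ∑ j, b j / (a j * τ + d j)`. Each summand is antitone on `[0, ∞)`, so `1 / G`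
is monotone. Since `(1 / G)'' = (2 G'² - G'' G) / G³`, concavity amounts to `2 G'² ≤ G'' G`,
and with `x j = a j * τ + d j` this is the Cauchy–Schwarz inequality
`(∑ b a / x²)² ≤ (∑ b / x) (∑ b a² / x³)` together with `c ≥ 0`.
-/

open Finset

theorem hasDerivAt_div_affine_pow (a b d τ : ℝ) (n : ℕ) (h : a * τ + d ≠ 0) :
    HasDerivAt (fun t => b / (a * t + d) ^ n) (-(n * b * a / (a * τ + d) ^ (n + 1))) τ := by
  have hx : HasDerivAt (fun t => a * t + d) a τ := by
    simpa using ((hasDerivAt_id τ).const_mul a).add_const d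
  refine ((hasDerivAt_const τ b).fun_div (hx.fun_pow n) (pow_ne_zero n h)).congr_deriv ?_
  rcases n with _ | n
  · simp
  · rw [Nat.add_sub_cancel]
    field_simp
    ring

theorem concaveOn_one_div_of_two_mul_sq_deriv_le {D : Set ℝ} (hD : Convex ℝ D)
    {G G' G'' : ℝ → ℝ} (hG : ∀ x ∈ D, HasDerivAt G (G' x) x)
    (hG' : ∀ x ∈ D, HasDerivAt G' (G'' x) x) (hpos : ∀ x ∈ D, 0 < G x)
    (h : ∀ x ∈ D, 2 * G' x ^ 2 ≤ G'' x * G x) :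
    ConcaveOn ℝ D (fun x => 1 / G x) := by
  have hderiv : ∀ x ∈ D, HasDerivAt (fun x => 1 / G x) (-G' x / G x ^ 2) x := fun x hx => by
    simpa only [one_div] using (hG x hx).fun_inv (hpos x hx).ne'
  have hderiv2 : ∀ x ∈ D, HasDerivAt (fun x => -G' x / G x ^ 2)
      ((2 * G' x ^ 2 - G'' x * G x) / G x ^ 3) x := fun x hx => by
    have hGx := (hpos x hx).ne'
    refine ((hG' x hx).fun_neg.fun_div ((hG x hx).fun_pow 2) (pow_ne_zero 2 hGx)).congr_deriv ?_
    field_simp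
    ring
  refine concaveOn_of_hasDerivWithinAt2_nonpos hD
    (fun x hx => (hderiv x hx).continuousAt.continuousWithinAt)
    (fun x hx => (hderiv x (interior_subset hx)).hasDerivWithinAt)
    (fun x hx => (hderiv2 x (interior_subset hx)).hasDerivWithinAt) fun x hx => ?_
  have hx := interior_subset hx
  exact div_nonpos_of_nonpos_of_nonneg (by linarith [h x hx]) (pow_nonneg (hpos x hx).le 3)

theorem sq_sum_mul_div_sq_le {ι : Type*} (s : Finset ι) (a b x : ι → ℝ)
    (hb : ∀ j ∈ s, 0 ≤ b j) (hx : ∀ j ∈ s, 0 < x j) :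
    (∑ j ∈ s, b j * a j / x j ^ 2) ^ 2 ≤
      (∑ j ∈ s, b j / x j) * ∑ j ∈ s, b j * a j ^ 2 / x j ^ 3 := by
  refine sum_sq_le_sum_mul_sum_of_sq_le_mul s
    (fun j hj => div_nonneg (hb j hj) (hx j hj).le)
    (fun j hj => div_nonneg (mul_nonneg (hb j hj) (sq_nonneg _)) (pow_nonneg (hx j hj).le 3))
    fun j hj => le_of_eq ?_
  have := (hx j hj).ne'
  field_simp

theorem affine_pos {ι : Type*} {a d : ι → ℝ} (ha : ∀ j, 0 ≤ a j) (hd : ∀ j, 0 < d j) {τ : ℝ}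
    (hτ : 0 ≤ τ) (j : ι) : 0 < a j * τ + d j :=
  add_pos_of_nonneg_of_pos (mul_nonneg (ha j) hτ) (hd j)

section AffineDenominators

variable {ι : Type*} [Fintype ι] {a b d : ι → ℝ}

theorem antitoneOn_add_sum_div_affine (c : ℝ) (ha : ∀ j, 0 ≤ a j) (hb : ∀ j, 0 ≤ b j)
    (hd : ∀ j, 0 < d j) :
    AntitoneOn (fun τ => c + ∑ j, b j / (a j * τ + d j)) (Set.Ici 0) := by
  intro τ hτ σ _ hτσ
  refine add_le_add_right (sum_le_sum fun j _ => ?_) c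
  exact div_le_div_of_nonneg_left (hb j) (affine_pos ha hd hτ j)
    (add_le_add_left (mul_le_mul_of_nonneg_left hτσ (ha j)) (d j))

theorem hasDerivAt_add_sum_div_affine (c : ℝ) {τ : ℝ} (hx : ∀ j, a j * τ + d j ≠ 0) :
    HasDerivAt (fun t => c + ∑ j, b j / (a j * t + d j))
      (-∑ j, b j * a j / (a j * τ + d j) ^ 2) τ := by
  have := HasDerivAt.fun_sum fun j (_ : j ∈ univ) =>
    hasDerivAt_div_affine_pow (a j) (b j) (d j) τ 1 (hx j)
  simpa only [pow_one, Nat.cast_one, one_mul, zero_add, sum_neg_distrib] using this.const_add c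

theorem hasDerivAt_neg_sum_mul_div_affine_sq {τ : ℝ} (hx : ∀ j, a j * τ + d j ≠ 0) :
    HasDerivAt (fun t => -∑ j, b j * a j / (a j * t + d j) ^ 2)
      (2 * ∑ j, b j * a j ^ 2 / (a j * τ + d j) ^ 3) τ := by
  have := (HasDerivAt.fun_sum fun j (_ : j ∈ univ) =>
    hasDerivAt_div_affine_pow (a j) (b j * a j) (d j) τ 2 (hx j)).neg
  refine this.congr_deriv ?_
  rw [sum_neg_distrib, neg_neg, mul_sum]
  refine sum_congr rfl fun j _ => ?_
  push_cast
  ring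

theorem two_mul_sq_deriv_le_deriv2_mul_add_sum_div_affine {c τ : ℝ} (hc : 0 ≤ c)
    (hb : ∀ j, 0 ≤ b j) (hx : ∀ j, 0 < a j * τ + d j) :
    2 * (-∑ j, b j * a j / (a j * τ + d j) ^ 2) ^ 2 ≤
      (2 * ∑ j, b j * a j ^ 2 / (a j * τ + d j) ^ 3) * (c + ∑ j, b j / (a j * τ + d j)) := by
  have hcs := sq_sum_mul_div_sq_le univ a b (fun j => a j * τ + d j) (fun j _ => hb j)
    fun j _ => hx j
  have hS2 : 0 ≤ ∑ j, b j * a j ^ 2 / (a j * τ + d j) ^ 3 :=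
    sum_nonneg fun j _ => div_nonneg (mul_nonneg (hb j) (sq_nonneg _)) (pow_nonneg (hx j).le 3)
  nlinarith [mul_nonneg hS2 hc]

end AffineDenominators

theorem stmt_11_general (m : ℕ) (c : ℝ) (hc : 0 < c)
    (a b d : Fin m → ℝ) (ha : ∀ j, 0 ≤ a j) (hb : ∀ j, 0 ≤ b j) (hd : ∀ j, 0 < d j) :
    MonotoneOn (fun τ : ℝ => 1 / (c + ∑ j, b j / (a j * τ + d j))) (Set.Ici 0) ∧
    ConcaveOn ℝ (Set.Ici 0) (fun τ : ℝ => 1 / (c + ∑ j, b j / (a j * τ + d j))) := by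
  have hpos : ∀ τ ∈ Set.Ici (0 : ℝ), 0 < c + ∑ j, b j / (a j * τ + d j) := fun τ hτ =>
    add_pos_of_pos_of_nonneg hc
      (sum_nonneg fun j _ => div_nonneg (hb j) (affine_pos ha hd hτ j).le)
  refine ⟨fun τ hτ σ hσ hτσ =>
    one_div_le_one_div_of_le (hpos σ hσ) (antitoneOn_add_sum_div_affine c ha hb hd hτ hσ hτσ), ?_⟩
  exact concaveOn_one_div_of_two_mul_sq_deriv_le (convex_Ici 0)
    (fun τ hτ => hasDerivAt_add_sum_div_affine c fun j => (affine_pos ha hd hτ j).ne')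
    (fun τ hτ => hasDerivAt_neg_sum_mul_div_affine_sq fun j => (affine_pos ha hd hτ j).ne')
    hpos fun τ hτ =>
      two_mul_sq_deriv_le_deriv2_mul_add_sum_div_affine hc.le hb (affine_pos ha hd hτ)

/-- The reciprocal whitening factor `τ ↦ 1/(c + Σ_j b_j/(a_j τ + d_j))` is
nondecreasing and concave on `[0,∞)`. -/
theorem stmt_11 (m : ℕ) (hm : 1 ≤ m) (c : ℝ) (hc : 0 < c)
    (a b d : Fin m → ℝ) (ha : ∀ j, 0 ≤ a j) (hb : ∀ j, 0 ≤ b j) (hd : ∀ j, 0 < d j) :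
    MonotoneOn (fun τ : ℝ => 1 / (c + ∑ j, b j / (a j * τ + d j))) (Set.Ici 0) ∧
    ConcaveOn ℝ (Set.Ici 0) (fun τ : ℝ => 1 / (c + ∑ j, b j / (a j * τ + d j))) :=
  stmt_11_general m c hc a b d ha hb hd
end

section
/- Let n ≥ 1 be an integer, a > 0, c > 0, γ > 0, β > 0, and v_1,…,v_n > 0. Define u(τ) = Σ_{j=1}^{n} v_j·c/(τ·a·v_j + c) for τ ≥ 0 and S = Σ_{j=1}^{n} v_j. Then the function 𝒦(τ) = ( S − u(τ) )/( γ + β·u(τ) ) is strictly increasing and concave on [0,∞), and satisfies 𝒦(0) = 0 and 𝒦(τ) > 0 for all τ > 0. -/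
/-!
Writing `w(τ) = γ + β u(τ)`, one has `𝒦 = (γ + βS)/β · w⁻¹ - 1/β`.
Since `u` is strictly decreasing, `𝒦` is strictly increasing, and `u(0) = S` gives `𝒦(0) = 0`.
For concavity, `w = 1/γ⁻¹ + Σ_j 1/ℓ_j` with `ℓ_j(τ) = (τ a v_j + c)/(β v_j c)` affine and positive,
so `w⁻¹` is a harmonic sum of positive concave functions. Such a sum `H(x) = (Σ_i 1/x_i)⁻¹` is
concave because, by Cauchy–Schwarz, `H(x) = min {Σ_i w_i² x_i | Σ_i w_i = 1}`, an infimum of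
linear functions of `x`.
-/

open Finset

theorem inv_sum_inv_le_sum_sq_mul {ι : Type*} (s : Finset ι) {x : ι → ℝ} (w : ι → ℝ)
    (hx : ∀ i ∈ s, 0 < x i) (hw : ∑ i ∈ s, w i = 1) :
    (∑ i ∈ s, (x i)⁻¹)⁻¹ ≤ ∑ i ∈ s, w i ^ 2 * x i := by
  have h := sq_sum_div_le_sum_sq_div s w (fun i hi => inv_pos.2 (hx i hi))
  simpa only [hw, one_pow, one_div, div_inv_eq_mul] using h

theorem ConcaveOn.inv_sum_inv {ι E : Type*} [AddCommGroup E] [Module ℝ E] {s : Set E}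
    {t : Finset ι} (ht : t.Nonempty) {f : ι → E → ℝ} (hf : ∀ i ∈ t, ConcaveOn ℝ s (f i))
    (hpos : ∀ i ∈ t, ∀ x ∈ s, 0 < f i x) :
    ConcaveOn ℝ s (fun x => (∑ i ∈ t, (f i x)⁻¹)⁻¹) := by
  obtain ⟨i₀, hi₀⟩ := ht
  refine ⟨(hf i₀ hi₀).1, fun x hx y hy θ₁ θ₂ hθ₁ hθ₂ hθ => ?_⟩
  set z := θ₁ • x + θ₂ • y
  have hz : z ∈ s := (hf i₀ hi₀).1 hx hy hθ₁ hθ₂ hθ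
  set H := (∑ i ∈ t, (f i z)⁻¹)⁻¹
  have hsum_pos : 0 < ∑ i ∈ t, (f i z)⁻¹ :=
    sum_pos (fun i hi => inv_pos.2 (hpos i hi z hz)) ⟨i₀, hi₀⟩
  -- the weights attaining the minimum `Σ_i w_i² x_i = H(x)` at `x = z`
  set w : ι → ℝ := fun i => H * (f i z)⁻¹
  have hw : ∑ i ∈ t, w i = 1 := by
    rw [← mul_sum]
    exact inv_mul_cancel₀ hsum_pos.ne'
  have hwz : ∑ i ∈ t, w i ^ 2 * f i z = H := by
    calc ∑ i ∈ t, w i ^ 2 * f i z = H * ∑ i ∈ t, w i := by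
          rw [mul_sum]
          refine sum_congr rfl fun i hi => ?_
          have := (hpos i hi z hz).ne'
          simp only [w]
          field_simp
      _ = H := by rw [hw, mul_one]
  calc θ₁ * (∑ i ∈ t, (f i x)⁻¹)⁻¹ + θ₂ * (∑ i ∈ t, (f i y)⁻¹)⁻¹
      ≤ θ₁ * ∑ i ∈ t, w i ^ 2 * f i x + θ₂ * ∑ i ∈ t, w i ^ 2 * f i y := by
        gcongr
        · exact inv_sum_inv_le_sum_sq_mul t w (fun i hi => hpos i hi x hx) hw
        · exact inv_sum_inv_le_sum_sq_mul t w (fun i hi => hpos i hi y hy) hw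
    _ = ∑ i ∈ t, w i ^ 2 * (θ₁ • f i x + θ₂ • f i y) := by
        rw [mul_sum, mul_sum, ← sum_add_distrib]
        exact sum_congr rfl fun i _ => by rw [smul_eq_mul, smul_eq_mul]; ring
    _ ≤ ∑ i ∈ t, w i ^ 2 * f i z :=
        sum_le_sum fun i hi => mul_le_mul_of_nonneg_left
          ((hf i hi).2 hx hy hθ₁ hθ₂ hθ) (sq_nonneg _)
    _ = H := hwz

theorem concaveOn_mul_add {s : Set ℝ} (hs : Convex ℝ s) (p q : ℝ) :
    ConcaveOn ℝ s (fun τ => τ * p + q) :=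
  (((LinearMap.id (R := ℝ)).smulRight p).concaveOn hs).add_const q

section Ratio

variable {s : Set ℝ} {u : ℝ → ℝ} {S γ β : ℝ}

theorem sub_div_add_mul_eq {x : ℝ} (hβ : β ≠ 0) (hw : γ + β * x ≠ 0) :
    (S - x) / (γ + β * x) = (γ + β * S) / β * (γ + β * x)⁻¹ - β⁻¹ := by
  rw [eq_sub_iff_add_eq, ← one_div β, div_add_div _ _ hw hβ, div_mul_eq_mul_div,
    ← div_eq_mul_inv, div_div]
  ring

theorem StrictAntiOn.strictMonoOn_sub_div_add_mul (hu : StrictAntiOn u s) (hβ : 0 < β)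
    (hS : 0 < γ + β * S) (hw : ∀ τ ∈ s, 0 < γ + β * u τ) :
    StrictMonoOn (fun τ => (S - u τ) / (γ + β * u τ)) s := by
  intro τ₁ h₁ τ₂ h₂ hlt
  have := hu h₁ h₂ hlt
  have := hw τ₂ h₂
  simp only [sub_div_add_mul_eq hβ.ne' (hw τ₁ h₁).ne', sub_div_add_mul_eq hβ.ne' (hw τ₂ h₂).ne']
  gcongr

theorem ConcaveOn.sub_div_add_mul (hu : ConcaveOn ℝ s fun τ => (γ + β * u τ)⁻¹)
    (hβ : 0 < β) (hS : 0 ≤ γ + β * S) (hw : ∀ τ ∈ s, γ + β * u τ ≠ 0) :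
    ConcaveOn ℝ s (fun τ => (S - u τ) / (γ + β * u τ)) :=
  ((hu.smul (div_nonneg hS hβ.le)).add_const (-β⁻¹)).congr fun τ hτ => by
    simp only [Pi.add_apply, smul_eq_mul]
    rw [sub_div_add_mul_eq hβ.ne' (hw τ hτ), sub_eq_add_neg]

end Ratio

/-- `u(τ)`: `N` times the average channel-estimation error variance after training of length `τ`. -/
noncomputable def errorVarianceSum {ι : Type*} [Fintype ι] (a c : ℝ) (v : ι → ℝ) (τ : ℝ) : ℝ :=
  ∑ j, v j * c / (τ * a * v j + c)

section ErrorVarianceSum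

variable {ι : Type*} [Fintype ι] {a c : ℝ} {v : ι → ℝ}

theorem errorVarianceSum_zero (hc : c ≠ 0) : errorVarianceSum a c v 0 = ∑ j, v j := by
  simp only [errorVarianceSum, zero_mul, zero_add, mul_div_cancel_right₀ _ hc]

theorem errorVarianceSum_nonneg (ha : 0 < a) (hc : 0 < c) (hv : ∀ j, 0 < v j) {τ : ℝ}
    (hτ : 0 ≤ τ) : 0 ≤ errorVarianceSum a c v τ :=
  sum_nonneg fun j _ => by
    have := hv j
    positivity

theorem strictAntiOn_errorVarianceSum [Nonempty ι] (ha : 0 < a) (hc : 0 < c)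
    (hv : ∀ j, 0 < v j) : StrictAntiOn (errorVarianceSum a c v) (Set.Ici 0) :=
  fun τ₁ (h₁ : 0 ≤ τ₁) τ₂ _ hlt => sum_lt_sum_of_nonempty univ_nonempty fun j _ => by
    have := hv j
    exact div_lt_div_of_pos_left (by positivity) (by positivity) (by gcongr)

theorem concaveOn_inv_add_mul_errorVarianceSum (ha : 0 < a) (hc : 0 < c) (hv : ∀ j, 0 < v j)
    {γ β : ℝ} (hγ : 0 < γ) (hβ : 0 < β) :
    ConcaveOn ℝ (Set.Ici 0) fun τ => (γ + β * errorVarianceSum a c v τ)⁻¹ := by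
  let ℓ : Option ι → ℝ → ℝ := fun i τ =>
    i.elim γ⁻¹ fun j => τ * (a * v j / (β * (v j * c))) + c / (β * (v j * c))
  have hℓ_concave : ∀ i, ConcaveOn ℝ (Set.Ici 0) (ℓ i) := by
    rintro (_ | j)
    · exact concaveOn_const _ (convex_Ici 0)
    · exact concaveOn_mul_add (convex_Ici 0) _ _
  have hℓ_pos : ∀ i, ∀ τ ∈ Set.Ici (0 : ℝ), 0 < ℓ i τ := by
    rintro (_ | j) τ (hτ : 0 ≤ τ)
    · exact inv_pos.2 hγ
    · have := hv j
      simp only [ℓ, Option.elim_some]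
      positivity
  have hsum : ∀ τ ∈ Set.Ici (0 : ℝ), ∑ i, (ℓ i τ)⁻¹ = γ + β * errorVarianceSum a c v τ := by
    intro τ (hτ : 0 ≤ τ)
    simp only [Fintype.sum_option, ℓ, Option.elim_none, Option.elim_some, inv_inv,
      errorVarianceSum, mul_sum]
    refine congrArg _ (sum_congr rfl fun j _ => ?_)
    have := hv j
    have : τ * a * v j + c ≠ 0 := by positivity
    field_simp
  exact (ConcaveOn.inv_sum_inv univ_nonempty (fun i _ => hℓ_concave i)
    (fun i _ => hℓ_pos i)).congr fun τ hτ => by simp only [hsum τ hτ]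

end ErrorVarianceSum

/-- With `u(τ) = Σ_j v_j c/(τ a v_j + c)` and `S = Σ_j v_j`, the function
`𝒦(τ) = (S - u(τ))/(γ + β u(τ))` is strictly increasing and concave on `[0,∞)`,
vanishes at `0`, and is positive on `(0,∞)`. -/
theorem stmt_12 (n : ℕ) (hn : 1 ≤ n) (a c γ β : ℝ)
    (ha : 0 < a) (hc : 0 < c) (hγ : 0 < γ) (hβ : 0 < β)
    (v : Fin n → ℝ) (hv : ∀ j, 0 < v j) :
    StrictMonoOn (fun τ : ℝ => ((∑ j, v j) - ∑ j, v j * c / (τ * a * v j + c)) /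
      (γ + β * ∑ j, v j * c / (τ * a * v j + c))) (Set.Ici 0) ∧
    ConcaveOn ℝ (Set.Ici 0) (fun τ : ℝ => ((∑ j, v j) - ∑ j, v j * c / (τ * a * v j + c)) /
      (γ + β * ∑ j, v j * c / (τ * a * v j + c))) ∧
    ((∑ j, v j) - ∑ j, v j * c / ((0 : ℝ) * a * v j + c)) /
      (γ + β * ∑ j, v j * c / ((0 : ℝ) * a * v j + c)) = 0 ∧
    ∀ τ : ℝ, 0 < τ →
      0 < ((∑ j, v j) - ∑ j, v j * c / (τ * a * v j + c)) /
        (γ + β * ∑ j, v j * c / (τ * a * v j + c)) := by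
  have : Nonempty (Fin n) := ⟨⟨0, hn⟩⟩
  let 𝒦 : ℝ → ℝ := fun τ =>
    ((∑ j, v j) - errorVarianceSum a c v τ) / (γ + β * errorVarianceSum a c v τ)
  show StrictMonoOn 𝒦 (Set.Ici 0) ∧ ConcaveOn ℝ (Set.Ici 0) 𝒦 ∧ 𝒦 0 = 0 ∧
    ∀ τ, 0 < τ → 0 < 𝒦 τ
  have hw : ∀ τ ∈ Set.Ici (0 : ℝ), 0 < γ + β * errorVarianceSum a c v τ := fun τ hτ => by
    have := errorVarianceSum_nonneg ha hc hv hτ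
    positivity
  have hS : 0 < γ + β * ∑ j, v j := by
    have : 0 ≤ ∑ j, v j := sum_nonneg fun j _ => (hv j).le
    positivity
  have hmono : StrictMonoOn 𝒦 (Set.Ici 0) :=
    (strictAntiOn_errorVarianceSum ha hc hv).strictMonoOn_sub_div_add_mul hβ hS hw
  have h𝒦0 : 𝒦 0 = 0 := by
    simp only [𝒦, errorVarianceSum_zero hc.ne', sub_self, zero_div]
  refine ⟨hmono, ?_, h𝒦0, fun τ hτ => h𝒦0 ▸ hmono Set.self_mem_Ici hτ.le hτ⟩
  exact (concaveOn_inv_add_mul_errorVarianceSum ha hc hv hγ hβ).sub_div_add_mul hβ hS.le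
    fun τ hτ => (hw τ hτ).ne'
end

section
/- Let T > 0 and let g : [0,T] → ℝ be nonnegative, nondecreasing and concave on [0,T]. Then the function h(τ) = (1 − τ/T)·g(τ) is concave on [0,T]. -/
/-! The factor `1 - τ/T` is affine, nonnegative and decreasing on `[0,T]` while `g` is increasing:
a product of two nonnegative concave functions that vary in opposite directions is concave
(`ConcaveOn.mul`), because the cross term of the product is then nonpositive. -/

lemma concaveOn_one_sub_div {s : Set ℝ} (hs : Convex ℝ s) (T : ℝ) :
    ConcaveOn ℝ s fun τ => 1 - τ / T :=
  (concaveOn_const 1 hs).sub ((LinearMap.mulRight ℝ T⁻¹).convexOn hs)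

lemma antitone_one_sub_div {T : ℝ} (hT : 0 < T) : Antitone fun τ : ℝ => 1 - τ / T :=
  fun _ _ hxy => sub_le_sub_left (div_le_div_of_nonneg_right hxy hT.le) 1

lemma one_sub_div_nonneg_of_le {T τ : ℝ} (hT : 0 < T) (hτ : τ ≤ T) : 0 ≤ 1 - τ / T :=
  sub_nonneg.2 ((div_le_one hT).2 hτ)

/-- If `g` is nonnegative, nondecreasing and concave on `[0,T]`, then
`h(τ) = (1 - τ/T) g(τ)` is concave on `[0,T]`. -/
theorem stmt_14 (T : ℝ) (hT : 0 < T) (g : ℝ → ℝ)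
    (hg_nonneg : ∀ τ ∈ Set.Icc 0 T, 0 ≤ g τ)
    (hg_mono : MonotoneOn g (Set.Icc 0 T))
    (hg_conc : ConcaveOn ℝ (Set.Icc 0 T) g) :
    ConcaveOn ℝ (Set.Icc 0 T) (fun τ => (1 - τ / T) * g τ) :=
  (concaveOn_one_sub_div (convex_Icc 0 T) T).mul hg_conc
    (fun _ hτ => one_sub_div_nonneg_of_le hT hτ.2) hg_nonneg
    (((antitone_one_sub_div hT).antitoneOn _).antivaryOn hg_mono)
end
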